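/- Consider L(W₁,…,W_{H+1}) = ½‖W_{H+1}···W₁X − Y‖_F² with d_x ≤ d_y and all hidden widths d_i ≥ d_x, XXᵀ invertible. If (W₁,…,W_{H+1}) is a critical point of L and σ_min(W_H···W₁) ≥ ε for some ε > 0, then (W_{H+1}···W₁X − Y)Xᵀ = 0 and (W₁,…,W_{H+1}) is a global minimum of L. -/

import Mathlib

/-!
Criticality with respect to the last layer says `E (W_H⋯W₁)ᵀ = 0` for
`E = (W_{H+1}⋯W₁X − Y)Xᵀ`. Since `σ_min(W_H⋯W₁) > 0`, the Gram matrix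
`(W_H⋯W₁)ᵀ(W_H⋯W₁)` is invertible, hence `E = 0`. These are the normal equations of the
least-squares problem in the end-to-end matrix `P = W_{H+1}⋯W₁`: the residual `PX − Y` is
orthogonal to `(P' − P)X` for every `P'`, so by Pythagoras
`‖P'X − Y‖² = ‖PX − Y‖² + ‖(P' − P)X‖² ≥ ‖PX − Y‖²`.
-/

open Matrix

/-- Squared Frobenius norm of a real matrix. -/
noncomputable def frobSq {m n : ℕ} (A : Matrix (Fin m) (Fin n) ℝ) : ℝ :=
  ∑ i, ∑ j, (A i j) ^ 2

/-- The smallest singular value of a tall matrix `M : ℝ^{n×l}` (with `l ≤ n`), computed as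
the square root of the smallest eigenvalue of `Mᵀ * M`. -/
noncomputable def sigmaMinCols {n l : ℕ} (M : Matrix (Fin n) (Fin l) ℝ) : ℝ :=
  Real.sqrt (⨅ i, (Matrix.isHermitian_conjTranspose_mul_self M).eigenvalues i)

theorem frobSq_eq_trace {m n : ℕ} (A : Matrix (Fin m) (Fin n) ℝ) : frobSq A = trace (A * Aᵀ) := by
  simp [frobSq, trace, mul_apply, sq]

theorem frobSq_nonneg {m n : ℕ} (A : Matrix (Fin m) (Fin n) ℝ) : 0 ≤ frobSq A := by
  unfold frobSq; positivity

theorem frobSq_add_of_mul_transpose_eq_zero {m n : ℕ} {C P : Matrix (Fin m) (Fin n) ℝ}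
    (h : C * Pᵀ = 0) : frobSq (C + P) = frobSq C + frobSq P := by
  have h' : P * Cᵀ = 0 := by simpa using congrArg transpose h
  simp only [frobSq_eq_trace, transpose_add, Matrix.add_mul, Matrix.mul_add, h, h', trace_add,
    add_zero, zero_add]

theorem frobSq_mul_sub_le_of_mul_transpose_eq_zero {a b c : ℕ}
    {P : Matrix (Fin a) (Fin b) ℝ} {X : Matrix (Fin b) (Fin c) ℝ} {Y : Matrix (Fin a) (Fin c) ℝ}
    (h : (P * X - Y) * Xᵀ = 0) (P' : Matrix (Fin a) (Fin b) ℝ) :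
    frobSq (P * X - Y) ≤ frobSq (P' * X - Y) := by
  have horth : (P * X - Y) * ((P' - P) * X)ᵀ = 0 := by
    rw [transpose_mul, ← Matrix.mul_assoc, h, Matrix.zero_mul]
  have hsplit : P' * X - Y = (P * X - Y) + (P' - P) * X := by
    rw [Matrix.sub_mul]; abel
  rw [hsplit, frobSq_add_of_mul_transpose_eq_zero horth]
  linarith [frobSq_nonneg ((P' - P) * X)]

theorem posDef_transpose_mul_self_of_sigmaMinCols_pos {n l : ℕ} {M : Matrix (Fin n) (Fin l) ℝ}
    (h : 0 < sigmaMinCols M) : (Mᵀ * M).PosDef := by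
  have hherm := isHermitian_conjTranspose_mul_self M
  have hinf : 0 < ⨅ i, hherm.eigenvalues i := Real.sqrt_pos.mp h
  rw [← conjTranspose_eq_transpose_of_trivial, hherm.posDef_iff_eigenvalues_pos]
  exact fun i => hinf.trans_le (ciInf_le (Set.finite_range _).bddBelow i)

theorem eq_zero_of_mul_transpose_eq_zero_of_sigmaMinCols_pos {p : Type*} [Fintype p]
    {n l : ℕ} {M : Matrix (Fin n) (Fin l) ℝ} (hM : 0 < sigmaMinCols M)
    {E : Matrix p (Fin l) ℝ} (h : E * Mᵀ = 0) : E = 0 := by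
  have hdet : IsUnit (Mᵀ * M).det :=
    (isUnit_iff_isUnit_det _).mp (posDef_transpose_mul_self_of_sigmaMinCols_pos hM).isUnit
  rw [← mul_nonsing_inv_cancel_right (A := Mᵀ * M) E hdet, ← Matrix.mul_assoc, h,
    Matrix.zero_mul, Matrix.zero_mul]

/-- `A i = W_{i+1}ᵀ⋯W_{H+1}ᵀ` and `B i = W₁ᵀ⋯W_iᵀ` with layers indexed from `0`, so that
`(A 0)ᵀ = W_{H+1}⋯W₁`, `(B H)ᵀ = W_H⋯W₁`, and `hcrit i` is the vanishing of `∂L/∂W_{i+1}`. -/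
theorem critical_point_is_global_min_dx_le_dy_general
    {H m : ℕ} {d : ℕ → ℕ}
    (X : Matrix (Fin (d 0)) (Fin m) ℝ) (Y : Matrix (Fin (d (H + 1))) (Fin m) ℝ)
    (A : ∀ i : ℕ, Matrix (Fin (d i)) (Fin (d (H + 1))) ℝ)
    (B : ∀ i : ℕ, Matrix (Fin (d 0)) (Fin (d i)) ℝ)
    (hAtop : A (H + 1) = 1)
    (ε : ℝ) (hε : 0 < ε)
    (hsigma : sigmaMinCols ((B H)ᵀ) ≥ ε)
    (hcrit : ∀ i ≤ H, A (i + 1) * (((A 0)ᵀ * X - Y) * Xᵀ) * B i = 0) :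
    ((A 0)ᵀ * X - Y) * Xᵀ = 0 ∧
    (∀ (V : ∀ i : ℕ, Matrix (Fin (d (i + 1))) (Fin (d i)) ℝ)
       (A' : ∀ i : ℕ, Matrix (Fin (d i)) (Fin (d (H + 1))) ℝ),
        A' (H + 1) = 1 →
        (∀ i ≤ H, A' i = (V i)ᵀ * A' (i + 1)) →
        (1 / 2 : ℝ) * frobSq ((A 0)ᵀ * X - Y) ≤
          (1 / 2 : ℝ) * frobSq ((A' 0)ᵀ * X - Y)) := by
  have hlast : ((A 0)ᵀ * X - Y) * Xᵀ * B H = 0 := by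
    simpa only [hAtop, Matrix.one_mul] using hcrit H le_rfl
  have hnormal : ((A 0)ᵀ * X - Y) * Xᵀ = 0 :=
    eq_zero_of_mul_transpose_eq_zero_of_sigmaMinCols_pos (hε.trans_le hsigma) hlast
  refine ⟨hnormal, fun _ A' _ _ => ?_⟩
  have := frobSq_mul_sub_le_of_mul_transpose_eq_zero hnormal (A' 0)ᵀ
  linarith

/-- Case `d_x ≤ d_y`, all widths `≥ d_x`: a critical point of
`L(W) = ½‖W_{H+1}···W₁X − Y‖_F²` with `σ_min(W_H···W₁) ≥ ε > 0` satisfies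
`(W_{H+1}···W₁X − Y)Xᵀ = 0` and is a global minimum of `L`.
Layers are indexed `0,…,H` (`W i` is the paper's `W_{i+1}`); the suffix transposed
products `A i = W_{i+1}ᵀ···W_{H+1}ᵀ` and prefix transposed products `B i = W₁ᵀ···W_iᵀ`
are characterized by their recurrences, so `(A 0)ᵀ = W_{H+1}···W₁`,
`(B H)ᵀ = W_H···W₁`, and criticality reads `A (i+1) E B i = 0` for all `i`. -/
theorem critical_point_is_global_min_dx_le_dy
    {H m : ℕ} {d : ℕ → ℕ}
    (hdxy : d 0 ≤ d (H + 1)) (hdxm : d 0 ≤ m)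
    (hwide : ∀ i ≤ H + 1, d 0 ≤ d i)
    (X : Matrix (Fin (d 0)) (Fin m) ℝ) (Y : Matrix (Fin (d (H + 1))) (Fin m) ℝ)
    (hX : IsUnit (X * Xᵀ))
    (W : ∀ i : ℕ, Matrix (Fin (d (i + 1))) (Fin (d i)) ℝ)
    (A : ∀ i : ℕ, Matrix (Fin (d i)) (Fin (d (H + 1))) ℝ)
    (B : ∀ i : ℕ, Matrix (Fin (d 0)) (Fin (d i)) ℝ)
    (hAtop : A (H + 1) = 1)
    (hA : ∀ i ≤ H, A i = (W i)ᵀ * A (i + 1))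
    (hB0 : B 0 = 1)
    (hB : ∀ i ≤ H, B (i + 1) = B i * (W i)ᵀ)
    (ε : ℝ) (hε : 0 < ε)
    (hsigma : sigmaMinCols ((B H)ᵀ) ≥ ε)
    (hcrit : ∀ i ≤ H, A (i + 1) * (((A 0)ᵀ * X - Y) * Xᵀ) * B i = 0) :
    ((A 0)ᵀ * X - Y) * Xᵀ = 0 ∧
    (∀ (V : ∀ i : ℕ, Matrix (Fin (d (i + 1))) (Fin (d i)) ℝ)
       (A' : ∀ i : ℕ, Matrix (Fin (d i)) (Fin (d (H + 1))) ℝ),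
        A' (H + 1) = 1 →
        (∀ i ≤ H, A' i = (V i)ᵀ * A' (i + 1)) →
        (1 / 2 : ℝ) * frobSq ((A 0)ᵀ * X - Y) ≤
          (1 / 2 : ℝ) * frobSq ((A' 0)ᵀ * X - Y)) :=
  critical_point_is_global_min_dx_le_dy_general X Y A B hAtop ε hε hsigma hcrit
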